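/- arXiv:1610.00581 — 6 statements merged into one kernel-verified Lean document; each statement's English description precedes it below -/
import Mathlib

section
/- Let G be a connected undirected graph whose edges are given an arbitrary orientation, and let H be the ancillary graph obtained by replacing each vertex v of G with three copies v_0, v_1, v_2 and each oriented edge (u,v) of G with the three edges (u_0,v_1), (u_1,v_2), (u_2,v_0). If G contains a cycle in which the number p of edges oriented in the direction of traversal and the number q of edges oriented against it satisfy p - q ≢ 0 (mod 3), then for every vertex k of G and every pair b ≠ b' in {0,1,2}, the vertices k_b and k_{b'} are connected by a path in H. -/
/-!
Walking along an edge `u → v` of `G` lifts to `H` by raising the level by one, and against it by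
lowering the level by one. Going once around the cycle therefore returns to the starting vertex
shifted by `p - q`, which generates `ZMod 3` when it is nonzero, so all three copies of that vertex
are connected in `H`. A path in `G` from any vertex `k` to the cycle lifts to `H` from each copy
of `k` with one and the same shift, so the copies of `k` are connected as well.
-/

/-- The ancillary triple-cover graph `H`: vertices are `V × ZMod 3`, and each
oriented edge `u → v` of the base graph (given by `dir`) yields the edges
`(u_b, v_{b+1})` for `b ∈ ZMod 3`. -/
def ancillary3 {V : Type} (dir : V → V → Prop) : SimpleGraph (V × ZMod 3) where
  Adj a b := (dir a.1 b.1 ∧ b.2 = a.2 + 1) ∨ (dir b.1 a.1 ∧ a.2 = b.2 + 1)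
  symm := by
    constructor
    rintro a b (⟨h1, h2⟩ | ⟨h1, h2⟩)
    · exact Or.inr ⟨h1, h2⟩
    · exact Or.inl ⟨h1, h2⟩
  loopless := by
    constructor
    rintro a (⟨-, h⟩ | ⟨-, h⟩) <;> simp at h

theorem ZMod.sum_range_natCast {M : Type*} [AddCommMonoid M] (n : ℕ) [NeZero n]
    (f : ZMod n → M) : ∑ i ∈ Finset.range n, f i = ∑ j : ZMod n, f j := by
  refine Finset.sum_nbij' (fun i => (i : ZMod n)) ZMod.val ?_ ?_ ?_ ?_ ?_
  · exact fun _ _ => Finset.mem_univ _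
  · exact fun j _ => Finset.mem_range.2 (ZMod.val_lt j)
  · exact fun i hi => ZMod.val_cast_of_lt (Finset.mem_range.1 hi)
  · exact fun j _ => ZMod.natCast_zmod_val j
  · exact fun _ _ => rfl

theorem ancillary3_reachable_fiber_of_reachable_add {V : Type} {dir : V → V → Prop} {x : V}
    {d : ZMod 3} (hd : d ≠ 0)
    (h : ∀ b, (ancillary3 dir).Reachable (x, b) (x, b + d)) (b b' : ZMod 3) :
    (ancillary3 dir).Reachable (x, b) (x, b') := by
  have hgen : ∀ d b b' : ZMod 3, d ≠ 0 → b' = b ∨ b' = b + d ∨ b' = b + d + d := by decide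
  rcases hgen d b b' hd with rfl | rfl | rfl
  · rfl
  · exact h b
  · exact (h b).trans (h _)

section Orientation

variable {V : Type} {G : SimpleGraph V} {dir : V → V → Prop} [DecidableRel dir]

def orientSign (dir : V → V → Prop) [DecidableRel dir] (u v : V) : ZMod 3 :=
  if dir u v then 1 else -1

theorem ancillary3_adj_add_orientSign (horient : ∀ u v, G.Adj u v ↔ (dir u v ∨ dir v u))
    {u v : V} (h : G.Adj u v) (b : ZMod 3) :
    (ancillary3 dir).Adj (u, b) (v, b + orientSign dir u v) := by
  unfold orientSign
  split_ifs with huv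
  · exact Or.inl ⟨huv, rfl⟩
  · exact Or.inr ⟨((horient u v).1 h).resolve_left huv, by ring⟩

theorem ancillary3_exists_reachable_add_of_walk
    (horient : ∀ u v, G.Adj u v ↔ (dir u v ∨ dir v u)) {u v : V} (w : G.Walk u v) :
    ∃ δ, ∀ b, (ancillary3 dir).Reachable (u, b) (v, b + δ) := by
  induction w with
  | nil => exact ⟨0, fun b => by simp⟩
  | @cons a x _ h _ ih =>
    obtain ⟨δ, hδ⟩ := ih
    refine ⟨orientSign dir a x + δ, fun b => ?_⟩
    rw [← add_assoc]
    exact (ancillary3_adj_add_orientSign horient h b).reachable.trans (hδ _)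

theorem ancillary3_reachable_add_sum_orientSign
    (horient : ∀ u v, G.Adj u v ↔ (dir u v ∨ dir v u))
    (f : ℕ → V) (hf : ∀ i, G.Adj (f i) (f (i + 1))) (m : ℕ) (b : ZMod 3) :
    (ancillary3 dir).Reachable (f 0, b)
      (f m, b + ∑ i ∈ Finset.range m, orientSign dir (f i) (f (i + 1))) := by
  induction m with
  | zero => simp
  | succ m ih =>
    rw [Finset.sum_range_succ, ← add_assoc]
    exact ih.trans (ancillary3_adj_add_orientSign horient (hf m) _).reachable

theorem sum_orientSign_eq_card_sub_card (horient : ∀ u v, G.Adj u v ↔ (dir u v ∨ dir v u))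
    (hone : ∀ u v, ¬ (dir u v ∧ dir v u)) {n : ℕ} [NeZero n] {c : ZMod n → V}
    (hadj : ∀ i, G.Adj (c i) (c (i + 1))) :
    ∑ i : ZMod n, orientSign dir (c i) (c (i + 1)) =
      ((Finset.univ.filter fun i : ZMod n => dir (c i) (c (i + 1))).card : ZMod 3) -
        (Finset.univ.filter fun i : ZMod n => dir (c (i + 1)) (c i)).card := by
  have hback : (Finset.univ.filter fun i : ZMod n => ¬ dir (c i) (c (i + 1))) =
      Finset.univ.filter fun i : ZMod n => dir (c (i + 1)) (c i) :=
    Finset.filter_congr fun i _ =>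
      ⟨((horient _ _).1 (hadj i)).resolve_left, fun h h' => hone _ _ ⟨h', h⟩⟩
  simp only [orientSign, Finset.sum_ite, Finset.sum_const, hback, nsmul_eq_mul, mul_one,
    mul_neg, sub_eq_add_neg]

theorem ancillary3_reachable_fiber_of_connected (hG : G.Connected)
    (horient : ∀ u v, G.Adj u v ↔ (dir u v ∨ dir v u)) {x : V}
    (hx : ∀ b b', (ancillary3 dir).Reachable (x, b) (x, b')) (k : V) (b b' : ZMod 3) :
    (ancillary3 dir).Reachable (k, b) (k, b') := by
  obtain ⟨δ, hδ⟩ := (hG.preconnected k x).elim (ancillary3_exists_reachable_add_of_walk horient)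
  exact (hδ b).trans ((hx _ _).trans (hδ b').symm)

end Orientation

theorem stmt_0_general {V : Type} (G : SimpleGraph V) (hG : G.Connected)
    (dir : V → V → Prop) [DecidableRel dir]
    (horient : ∀ u v, G.Adj u v ↔ (dir u v ∨ dir v u))
    (hone : ∀ u v, ¬ (dir u v ∧ dir v u))
    (n : ℕ) [NeZero n]
    (c : ZMod n → V)
    (hadj : ∀ i, G.Adj (c i) (c (i + 1)))
    (p q : ℕ)
    (hp : p = (Finset.univ.filter fun i : ZMod n => dir (c i) (c (i + 1))).card)
    (hq : q = (Finset.univ.filter fun i : ZMod n => dir (c (i + 1)) (c i)).card)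
    (hD : ¬ ((3 : ℤ) ∣ ((p : ℤ) - (q : ℤ)))) :
    ∀ (k : V) (b b' : ZMod 3), b ≠ b' →
      (ancillary3 dir).Reachable (k, b) (k, b') := by
  have hpq : (p : ZMod 3) - q ≠ 0 := by
    have := (ZMod.intCast_zmod_eq_zero_iff_dvd ((p : ℤ) - q) 3).not.2 (by exact_mod_cast hD)
    exact_mod_cast this
  have hcycle : ∀ b, (ancillary3 dir).Reachable (c 0, b) (c 0, b + (p - q)) := by
    intro b
    have h := ancillary3_reachable_add_sum_orientSign horient (fun i : ℕ => c i)
      (fun i => by simpa using hadj i) n b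
    simp only [Nat.cast_zero, Nat.cast_add, Nat.cast_one, ZMod.natCast_self] at h
    rwa [ZMod.sum_range_natCast n fun i => orientSign dir (c i) (c (i + 1)),
      sum_orientSign_eq_card_sub_card horient hone hadj, ← hp, ← hq] at h
  intro k b b' _
  exact ancillary3_reachable_fiber_of_connected hG horient
    (ancillary3_reachable_fiber_of_reachable_add hpq hcycle) k b b'

theorem stmt_0 {V : Type} (G : SimpleGraph V) (hG : G.Connected)
    (dir : V → V → Prop) [DecidableRel dir]
    (horient : ∀ u v, G.Adj u v ↔ (dir u v ∨ dir v u))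
    (hone : ∀ u v, ¬ (dir u v ∧ dir v u))
    (n : ℕ) [NeZero n] (hn : 3 ≤ n)
    (c : ZMod n → V) (hinj : Function.Injective c)
    (hadj : ∀ i, G.Adj (c i) (c (i + 1)))
    (p q : ℕ)
    (hp : p = (Finset.univ.filter fun i : ZMod n => dir (c i) (c (i + 1))).card)
    (hq : q = (Finset.univ.filter fun i : ZMod n => dir (c (i + 1)) (c i)).card)
    (hD : ¬ ((3 : ℤ) ∣ ((p : ℤ) - (q : ℤ)))) :
    ∀ (k : V) (b b' : ZMod 3), b ≠ b' →
      (ancillary3 dir).Reachable (k, b) (k, b') :=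
  stmt_0_general G hG dir horient hone n c hadj p q hp hq hD
end

section
/- Let G be a connected undirected graph with an orientation of its edges, and suppose G contains a cycle C of length c through a vertex k such that the number of clockwise edges minus the number of anticlockwise edges of C is not divisible by 3. Then in the ancillary graph H (three-fold cover construction with levels indexed by Z/3), there is a path from k_0 to k_1 of length at most 2c. -/
/-!
Lift the cycle to `H`: starting at `k_b`, every clockwise edge raises the level by one and every
anticlockwise edge lowers it by one, so a full turn ends at `k_{b+s}` with `s = p - q ≠ 0` in
`ZMod 3`. Going around once or twice therefore leads from `k_0` to `k_1` by a walk of length at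
most `2c`, and this walk contains a path.
-/

open Finset SimpleGraph

theorem ZMod.sum_range_natCast_add {M : Type*} [AddCommMonoid M] {n : ℕ} [NeZero n]
    (f : ZMod n → M) (a : ZMod n) : ∑ j ∈ range n, f (a + j) = ∑ i, f i := by
  refine sum_nbij' (fun j => a + j) (fun i => (i - a).val) (fun _ _ => mem_univ _)
    (fun i _ => mem_range.mpr (ZMod.val_lt _)) (fun j hj => ?_) (fun i _ => ?_) (fun _ _ => rfl)
  · rw [add_sub_cancel_left, ZMod.val_natCast, Nat.mod_eq_of_lt (mem_range.mp hj)]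
  · rw [ZMod.natCast_val, ZMod.cast_id, add_sub_cancel]

theorem Finset.sum_ite_one_neg_one {ι R : Type*} [Fintype ι] [Ring R] (P : ι → Prop)
    [DecidablePred P] : ∑ i, (if P i then (1 : R) else -1) = #{i | P i} - #{i | ¬ P i} := by
  rw [sum_ite, sum_const, sum_const]
  simp [sub_eq_add_neg]

theorem ZMod.exists_le_two_nsmul_eq_one (s : ZMod 3) (hs : s ≠ 0) : ∃ m ≤ 2, m • s = 1 := by
  revert s
  decide

theorem SimpleGraph.exists_walk_nsmul_add {V A : Type*} [AddMonoid A] (H : SimpleGraph (V × A))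
    (v : V) (s : A) (ℓ : ℕ) (h : ∀ b, ∃ w : H.Walk (v, b) (v, b + s), w.length = ℓ) (b : A) :
    ∀ m : ℕ, ∃ w : H.Walk (v, b) (v, b + m • s), w.length = m * ℓ
  | 0 => ⟨Walk.nil.copy rfl (by rw [zero_smul, add_zero]), by simp⟩
  | m + 1 => by
    obtain ⟨w, hw⟩ := exists_walk_nsmul_add H v s ℓ h b m
    obtain ⟨w', hw'⟩ := h (b + m • s)
    exact ⟨(w.append w').copy rfl (by rw [succ_nsmul, add_assoc]), by
      rw [Walk.length_copy, Walk.length_append, hw, hw', add_one_mul]⟩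

section CycleLift

variable {V : Type} (dir : V → V → Prop) [DecidableRel dir] {n : ℕ} (c : ZMod n → V)

def cycleShift (i : ZMod n) : ZMod 3 := if dir (c i) (c (i + 1)) then 1 else -1

theorem ancillary3_adj_cycleShift {i : ZMod n} (hi : dir (c i) (c (i + 1)) ∨ dir (c (i + 1)) (c i))
    (b : ZMod 3) : (ancillary3 dir).Adj (c i, b) (c (i + 1), b + cycleShift dir c i) := by
  unfold cycleShift
  split_ifs with h
  · exact Or.inl ⟨h, rfl⟩
  · exact Or.inr ⟨hi.resolve_left h, by simp⟩

theorem exists_walk_cycle_arc (hstep : ∀ i, dir (c i) (c (i + 1)) ∨ dir (c (i + 1)) (c i))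
    (a : ZMod n) (b : ZMod 3) : ∀ m : ℕ, ∃ w : (ancillary3 dir).Walk (c a, b)
      (c (a + m), b + ∑ j ∈ range m, cycleShift dir c (a + j)), w.length = m
  | 0 => ⟨(Walk.nil (u := (c a, b))).copy rfl (by simp), Walk.length_copy _ _ _⟩
  | m + 1 => by
    obtain ⟨w, hw⟩ := exists_walk_cycle_arc hstep a b m
    exact ⟨(w.concat (ancillary3_adj_cycleShift dir c (hstep _) _)).copy rfl
      (by rw [sum_range_succ, Nat.cast_succ, add_assoc, add_assoc]), by simp [hw]⟩

theorem exists_walk_around_cycle [NeZero n]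
    (hstep : ∀ i, dir (c i) (c (i + 1)) ∨ dir (c (i + 1)) (c i)) (a : ZMod n) (b : ZMod 3) :
    ∃ w : (ancillary3 dir).Walk (c a, b) (c a, b + ∑ i, cycleShift dir c i), w.length = n := by
  obtain ⟨w, hw⟩ := exists_walk_cycle_arc dir c hstep a b n
  exact ⟨w.copy rfl (by rw [ZMod.natCast_self, add_zero, ZMod.sum_range_natCast_add]), by simp [hw]⟩

theorem sum_cycleShift [NeZero n] (hback : ∀ i, dir (c (i + 1)) (c i) ↔ ¬ dir (c i) (c (i + 1))) :
    ∑ i, cycleShift dir c i =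
      #{i | dir (c i) (c (i + 1))} - (#{i | dir (c (i + 1)) (c i)} : ZMod 3) := by
  simp only [cycleShift, hback, sum_ite_one_neg_one]

end CycleLift

theorem stmt_2_general {V : Type} (G : SimpleGraph V)
    (dir : V → V → Prop) [DecidableRel dir]
    (horient : ∀ u v, G.Adj u v ↔ (dir u v ∨ dir v u))
    (hone : ∀ u v, ¬ (dir u v ∧ dir v u))
    (n : ℕ) [NeZero n]
    (c : ZMod n → V)
    (hadj : ∀ i, G.Adj (c i) (c (i + 1)))
    (k : V) (hk : ∃ i, c i = k)
    (p q : ℕ)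
    (hp : p = (Finset.univ.filter fun i : ZMod n => dir (c i) (c (i + 1))).card)
    (hq : q = (Finset.univ.filter fun i : ZMod n => dir (c (i + 1)) (c i)).card)
    (hD : ¬ ((3 : ℤ) ∣ ((p : ℤ) - (q : ℤ)))) :
    ∃ w : (ancillary3 dir).Walk (k, 0) (k, 1), w.IsPath ∧ w.length ≤ 2 * n := by
  classical
  obtain ⟨a, rfl⟩ := hk
  have hstep i : dir (c i) (c (i + 1)) ∨ dir (c (i + 1)) (c i) := (horient _ _).mp (hadj i)
  have hback i : dir (c (i + 1)) (c i) ↔ ¬ dir (c i) (c (i + 1)) :=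
    ⟨fun h h' => hone _ _ ⟨h', h⟩, (hstep i).resolve_left⟩
  have hshift : ∑ i, cycleShift dir c i ≠ 0 := by
    rw [sum_cycleShift dir c hback, ← hp, ← hq]
    exact_mod_cast mt (ZMod.intCast_zmod_eq_zero_iff_dvd _ 3).mp hD
  obtain ⟨m, hm, hm_one⟩ := ZMod.exists_le_two_nsmul_eq_one _ hshift
  obtain ⟨w, hw⟩ := exists_walk_nsmul_add _ (c a) _ n (exists_walk_around_cycle dir c hstep a) 0 m
  refine ⟨(w.copy rfl (by rw [hm_one, zero_add])).bypass, Walk.bypass_isPath _, ?_⟩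
  calc _ ≤ (w.copy rfl (by rw [hm_one, zero_add])).length := Walk.length_bypass_le_length _
    _ = m * n := by rw [Walk.length_copy, hw]
    _ ≤ 2 * n := Nat.mul_le_mul_right n hm

theorem stmt_2 {V : Type} (G : SimpleGraph V) (hG : G.Connected)
    (dir : V → V → Prop) [DecidableRel dir]
    (horient : ∀ u v, G.Adj u v ↔ (dir u v ∨ dir v u))
    (hone : ∀ u v, ¬ (dir u v ∧ dir v u))
    (n : ℕ) [NeZero n] (hn : 3 ≤ n)
    (c : ZMod n → V) (hinj : Function.Injective c)
    (hadj : ∀ i, G.Adj (c i) (c (i + 1)))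
    (k : V) (hk : ∃ i, c i = k)
    (p q : ℕ)
    (hp : p = (Finset.univ.filter fun i : ZMod n => dir (c i) (c (i + 1))).card)
    (hq : q = (Finset.univ.filter fun i : ZMod n => dir (c (i + 1)) (c i)).card)
    (hD : ¬ ((3 : ℤ) ∣ ((p : ℤ) - (q : ℤ)))) :
    ∃ w : (ancillary3 dir).Walk (k, 0) (k, 1), w.IsPath ∧ w.length ≤ 2 * n :=
  stmt_2_general G dir horient hone n c hadj k hk p q hp hq hD
end

section
/- Let A and B be matrices with n rows and orthonormal columns, and let U = R_B R_A with R_A = 2AA† − I, R_B = 2BB† − I. Then the +1 eigenspace of U contains (and in fact equals) (C(A) ∩ C(B)) ⊕ (C(A)^⊥ ∩ C(B)^⊥), where C(A), C(B) denote the column spaces of A and B. -/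
/-!
With `P`, `Q` the orthogonal projections onto `C(A)`, `C(B)` (these are `AA†` and `BB†`), the
reflection `R_B = 2Q - 1` is an involution, so `R_B R_A x = x` iff `R_A x = R_B x`, i.e. iff
`P x = Q x`. Two orthogonal projections agree at `x` exactly when `x = P x + (x - P x)` splits into
a part in `C(A) ∩ C(B)` and a part in `C(A)^⊥ ∩ C(B)^⊥`.
-/

theorem IsIdempotentElem.two_smul_sub_one_mul_self {R A : Type*} [CommRing R] [Ring A]
    [Algebra R A] {q : A} (hq : IsIdempotentElem q) :
    ((2 : R) • q - 1) * ((2 : R) • q - 1) = 1 := by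
  rw [sub_mul, mul_sub, mul_sub, smul_mul_smul_comm, hq.eq, mul_one, one_mul, one_mul]
  module

open Module End in
theorem eigenspace_reflection_mul_reflection_one {K V : Type*} [Field K] [NeZero (2 : K)]
    [AddCommGroup V] [Module K V] {P Q : End K V} (hQ : IsIdempotentElem Q) :
    eigenspace (((2 : K) • Q - 1) * ((2 : K) • P - 1)) 1 = LinearMap.ker (P - Q) := by
  have hR := hQ.two_smul_sub_one_mul_self (R := K)
  ext x
  rw [mem_eigenspace_iff, one_smul, LinearMap.mem_ker, LinearMap.sub_apply, sub_eq_zero]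
  constructor
  · intro h
    have h' := congrArg (⇑((2 : K) • Q - 1)) h
    rw [← mul_apply, ← mul_assoc, hR, one_mul] at h'
    simp only [LinearMap.sub_apply, LinearMap.smul_apply, one_apply] at h'
    exact smul_right_injective V (two_ne_zero' K) (sub_left_injective h')
  · intro h
    have hRP : ((2 : K) • P - 1) x = ((2 : K) • Q - 1) x := by simp [h]
    rw [mul_apply, hRP, ← mul_apply, hR, one_apply]

namespace Submodule

variable {𝕜 E : Type*} [RCLike 𝕜] [NormedAddCommGroup E] [InnerProductSpace 𝕜 E]

theorem ker_starProjection_sub_starProjection (K L : Submodule 𝕜 E) [K.HasOrthogonalProjection]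
    [L.HasOrthogonalProjection] :
    LinearMap.ker (K.starProjection.toLinearMap - L.starProjection.toLinearMap)
      = K ⊓ L ⊔ Kᗮ ⊓ Lᗮ := by
  ext x
  rw [LinearMap.mem_ker, LinearMap.sub_apply, sub_eq_zero, ContinuousLinearMap.coe_coe,
    ContinuousLinearMap.coe_coe]
  constructor
  · intro h
    refine mem_sup.mpr ⟨K.starProjection x, ⟨K.starProjection_apply_mem x, ?_⟩,
      x - K.starProjection x, ⟨K.sub_starProjection_mem_orthogonal x, ?_⟩, add_sub_cancel _ _⟩
    · exact h ▸ L.starProjection_apply_mem x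
    · exact h ▸ L.sub_starProjection_mem_orthogonal x
  · intro hx
    obtain ⟨u, ⟨huK, huL⟩, v, ⟨hvK, hvL⟩, rfl⟩ := mem_sup.mp hx
    simp only [map_add, starProjection_eq_self_iff.mpr huK, starProjection_eq_self_iff.mpr huL,
      (starProjection_apply_eq_zero_iff K).mpr hvK, (starProjection_apply_eq_zero_iff L).mpr hvL]

end Submodule

theorem LinearMap.comp_adjoint_eq_starProjection_range {𝕜 E F : Type*} [RCLike 𝕜]
    [NormedAddCommGroup E] [InnerProductSpace 𝕜 E] [FiniteDimensional 𝕜 E]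
    [NormedAddCommGroup F] [InnerProductSpace 𝕜 F] [FiniteDimensional 𝕜 F]
    {T : F →ₗ[𝕜] E} (hT : T.adjoint ∘ₗ T = id) :
    T ∘ₗ T.adjoint = (range T).starProjection := by
  have hidem : IsIdempotentElem (T ∘ₗ T.adjoint) := by
    change (T ∘ₗ T.adjoint) ∘ₗ (T ∘ₗ T.adjoint) = T ∘ₗ T.adjoint
    rw [comp_assoc, ← comp_assoc T.adjoint, hT, id_comp]
  obtain ⟨_, h⟩ := isSymmetricProjection_iff_eq_coe_starProjection_range.mp
    ⟨hidem, isSymmetric_self_comp_adjoint T⟩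
  rw [h]
  simp_rw [range_self_comp_adjoint]

namespace Matrix

theorem toEuclideanLin_mul_conjTranspose_eq_starProjection {𝕜 : Type*} [RCLike 𝕜]
    {m n : Type*} [Fintype m] [DecidableEq m] [Fintype n] [DecidableEq n] {A : Matrix m n 𝕜}
    (hA : Aᴴ * A = 1) :
    toEuclideanLin (A * Aᴴ) = (LinearMap.range (toEuclideanLin A)).starProjection := by
  rw [toLpLin_mul_same, toEuclideanLin_conjTranspose_eq_adjoint]
  refine LinearMap.comp_adjoint_eq_starProjection_range ?_
  rw [← toEuclideanLin_conjTranspose_eq_adjoint, ← toLpLin_mul_same, hA, toLpLin_one]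

end Matrix

open Matrix in
theorem stmt_11 (n k l : ℕ) (A : Matrix (Fin n) (Fin k) ℂ) (B : Matrix (Fin n) (Fin l) ℂ)
    (hA : Aᴴ * A = 1) (hB : Bᴴ * B = 1) :
    Module.End.eigenspace
        (Matrix.toEuclideanLin
          (((2 : ℂ) • (B * Bᴴ) - 1) * ((2 : ℂ) • (A * Aᴴ) - 1))) 1
      = (LinearMap.range (Matrix.toEuclideanLin A)
            ⊓ LinearMap.range (Matrix.toEuclideanLin B))
        ⊔ ((LinearMap.range (Matrix.toEuclideanLin A))ᗮ
            ⊓ (LinearMap.range (Matrix.toEuclideanLin B))ᗮ) := by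
  have hU : toEuclideanLin (((2 : ℂ) • (B * Bᴴ) - 1) * ((2 : ℂ) • (A * Aᴴ) - 1))
      = ((2 : ℂ) • toEuclideanLin (B * Bᴴ) - 1) * ((2 : ℂ) • toEuclideanLin (A * Aᴴ) - 1) := by
    simp only [toLpLin_mul_same, map_sub, map_smul, toLpLin_one]
    rfl
  rw [hU, toEuclideanLin_mul_conjTranspose_eq_starProjection hA,
    toEuclideanLin_mul_conjTranspose_eq_starProjection hB,
    eigenspace_reflection_mul_reflection_one
      (ContinuousLinearMap.IsIdempotentElem.toLinearMap
        (Submodule.isIdempotentElem_starProjection _)),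
    Submodule.ker_starProjection_sub_starProjection]
end

section
/- Let A and B be matrices with n rows and orthonormal columns and U = R_B R_A the product of the reflections about their column spaces. Then the −1 eigenspace of U equals (C(A) ∩ C(B)^⊥) ⊕ (C(A)^⊥ ∩ C(B)), and moreover C(A)^⊥ ∩ C(B) = B(ker(A†B)). -/
/-!
For idempotents `p, q` one has `(2q - 1)(2p - 1) + 1 = 2 (2q - 1)(p + q - 1)`, and `2q - 1` is an
involution, so the `-1` eigenspace of `(2q - 1)(2p - 1)` is `ker (p + q - 1)`. A vector with
`p x + q x = x` is the sum of `p x ∈ range p ⊓ ker q` and `q x ∈ ker p ⊓ range q`. For `A` with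
orthonormal columns, `A Aᴴ` is the orthogonal projection onto `C(A)`, with kernel `C(A)ᗮ = ker Aᴴ`;
the second identity is then `ker Aᴴ ⊓ C(B) = B (ker (Aᴴ B))`.
-/

open LinearMap Module.End

theorem IsIdempotentElem.two_mul_sub_one_mul_self {S : Type*} [Ring S] {q : S}
    (hq : IsIdempotentElem q) : (2 * q - 1) * (2 * q - 1) = 1 := by
  have : q * q = q := hq
  noncomm_ring [this]

theorem IsIdempotentElem.two_mul_sub_one_mul_add_one {S : Type*} [Ring S] {p q : S}
    (hq : IsIdempotentElem q) :
    (2 * q - 1) * (2 * p - 1) + 1 = 2 * ((2 * q - 1) * (p + q - 1)) := by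
  have : q * q = q := hq
  noncomm_ring [this]

theorem IsIdempotentElem.ker_add_sub_one {R M : Type*} [Ring R] [AddCommGroup M] [Module R M]
    {p q : Module.End R M} (hp : IsIdempotentElem p) (hq : IsIdempotentElem q) :
    ker (p + q - 1) = (range p ⊓ ker q) ⊔ (ker p ⊓ range q) := by
  ext x
  simp only [mem_ker, LinearMap.sub_apply, LinearMap.add_apply, one_apply, sub_eq_zero]
  constructor
  · intro hx
    have hqp : q (p x) = 0 := by
      have := congrArg q hx
      rwa [map_add, ← mul_apply q q, hq.eq, add_eq_right] at this
    have hpq : p (q x) = 0 := by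
      have := congrArg p hx
      rwa [map_add, ← mul_apply p p, hp.eq, add_eq_left] at this
    rw [← hx]
    exact Submodule.add_mem_sup ⟨mem_range_self p x, hqp⟩ ⟨hpq, mem_range_self q x⟩
  · intro hx
    obtain ⟨a, ha, b, hb, rfl⟩ := Submodule.mem_sup.mp hx
    rw [map_add, map_add, hp.mem_range_iff.mp ha.1, mem_ker.mp ha.2, mem_ker.mp hb.1,
      hq.mem_range_iff.mp hb.2, add_zero, zero_add]

theorem IsIdempotentElem.eigenspace_two_mul_sub_one_mul_neg_one {R M : Type*} [CommRing R]
    [Invertible (2 : R)] [AddCommGroup M] [Module R M] {p q : Module.End R M}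
    (hp : IsIdempotentElem p) (hq : IsIdempotentElem q) :
    eigenspace ((2 * q - 1) * (2 * p - 1)) (-1) = (range p ⊓ ker q) ⊔ (ker p ⊓ range q) := by
  have hinv : (⅟(2 : R) • (2 * q - 1)) * (2 * (2 * q - 1)) = 1 := by
    rw [smul_mul_assoc, ← (Nat.cast_commute 2 _).left_comm, hq.two_mul_sub_one_mul_self,
      mul_one]
    ext x
    simp [← ofNat_smul_eq_nsmul (R := R), smul_smul]
  rw [eigenspace_def, neg_smul, one_smul, sub_neg_eq_add, hq.two_mul_sub_one_mul_add_one,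
    ← mul_assoc, ← hp.ker_add_sub_one hq]
  exact ker_comp_of_ker_eq_bot _ (ker_eq_bot_of_inverse hinv)

section Matrix

open Matrix

variable {𝕜 m n : Type*} [RCLike 𝕜] [Fintype m] [Fintype n] [DecidableEq n]

theorem Matrix.isIdempotentElem_mul_conjTranspose_self {A : Matrix m n 𝕜} (hA : Aᴴ * A = 1) :
    IsIdempotentElem (A * Aᴴ) := by
  rw [IsIdempotentElem, Matrix.mul_assoc, ← Matrix.mul_assoc Aᴴ, hA, Matrix.one_mul]

variable [DecidableEq m]

theorem Matrix.isIdempotentElem_toEuclideanLin_mul_conjTranspose_self {A : Matrix m n 𝕜}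
    (hA : Aᴴ * A = 1) : IsIdempotentElem (toEuclideanLin (A * Aᴴ)) :=
  (isIdempotentElem_mul_conjTranspose_self hA).map (toLpLinAlgEquiv (p := 2))

theorem Matrix.range_toEuclideanLin_mul_conjTranspose_self {A : Matrix m n 𝕜} (hA : Aᴴ * A = 1) :
    range (toEuclideanLin (A * Aᴴ)) = range (toEuclideanLin A) := by
  refine le_antisymm ?_ ?_
  · rw [toLpLin_mul_same]
    exact range_comp_le_range _ _
  · conv_lhs => rw [← Matrix.mul_one A, ← hA, ← Matrix.mul_assoc, toLpLin_mul_same]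
    exact range_comp_le_range _ _

theorem Matrix.orthogonal_range_toEuclideanLin (A : Matrix m n 𝕜) :
    (range (toEuclideanLin A))ᗮ = ker (toEuclideanLin Aᴴ) := by
  rw [LinearMap.orthogonal_range, toEuclideanLin_conjTranspose_eq_adjoint]

theorem Matrix.ker_toEuclideanLin_mul_conjTranspose_self {A : Matrix m n 𝕜} (hA : Aᴴ * A = 1) :
    ker (toEuclideanLin (A * Aᴴ)) = (range (toEuclideanLin A))ᗮ := by
  have hsymm : (toEuclideanLin (A * Aᴴ)).IsSymmetric :=
    isSymmetric_toEuclideanLin_iff.mpr (isHermitian_mul_conjTranspose_self A)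
  rw [← hsymm.orthogonal_range, range_toEuclideanLin_mul_conjTranspose_self hA]

theorem Matrix.toEuclideanLin_two_smul_sub_one (P : Matrix m m 𝕜) :
    toEuclideanLin ((2 : 𝕜) • P - 1) = 2 * toEuclideanLin P - 1 := by
  change toLpLinAlgEquiv (p := 2) _ = _
  rw [map_sub, map_one, two_smul, map_add, two_mul]
  rfl

end Matrix

open Matrix in
theorem stmt_12 (n k l : ℕ) (A : Matrix (Fin n) (Fin k) ℂ) (B : Matrix (Fin n) (Fin l) ℂ)
    (hA : Aᴴ * A = 1) (hB : Bᴴ * B = 1) :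
    (Module.End.eigenspace
        (Matrix.toEuclideanLin
          (((2 : ℂ) • (B * Bᴴ) - 1) * ((2 : ℂ) • (A * Aᴴ) - 1))) (-1)
      = (LinearMap.range (Matrix.toEuclideanLin A)
            ⊓ (LinearMap.range (Matrix.toEuclideanLin B))ᗮ)
        ⊔ ((LinearMap.range (Matrix.toEuclideanLin A))ᗮ
            ⊓ LinearMap.range (Matrix.toEuclideanLin B))) ∧
    (LinearMap.range (Matrix.toEuclideanLin A))ᗮ
        ⊓ LinearMap.range (Matrix.toEuclideanLin B)
      = Submodule.map (Matrix.toEuclideanLin B)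
          (LinearMap.ker (Matrix.toEuclideanLin (Aᴴ * B))) := by
  have hPA := isIdempotentElem_toEuclideanLin_mul_conjTranspose_self hA
  have hPB := isIdempotentElem_toEuclideanLin_mul_conjTranspose_self hB
  constructor
  · rw [toLpLin_mul_same, ← mul_eq_comp, toEuclideanLin_two_smul_sub_one,
      toEuclideanLin_two_smul_sub_one, hPA.eigenspace_two_mul_sub_one_mul_neg_one hPB,
      range_toEuclideanLin_mul_conjTranspose_self hA,
      range_toEuclideanLin_mul_conjTranspose_self hB,
      ker_toEuclideanLin_mul_conjTranspose_self hA, ker_toEuclideanLin_mul_conjTranspose_self hB]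
  · rw [orthogonal_range_toEuclideanLin, toLpLin_mul_same, ker_comp, Submodule.map_comap_eq,
      inf_comm]
end

section
/- (Effective spectral gap lemma) Let A, B be matrices with orthonormal columns, Π_A = AA†, Π_B = BB†, and U = (2Π_B − I)(2Π_A − I). For Θ ≥ 0, let P_Θ be the orthogonal projection onto the span of all eigenvectors of U with eigenvalue e^{iθ} where |θ| ≤ Θ. Then for any vector w with Π_A w = 0, we have ‖P_Θ Π_B w‖ ≤ (Θ/2)‖w‖. -/
/-!
Since `Π_A w = 0`, the reflection `2Π_A - 1` sends `w` to `-w`, so `(1 - U) w = 2 Π_B w`. Writing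
`p` for the projection of `Π_B w` onto `S`,
`‖p‖² = Re ⟪p, Π_B w⟫ = ½ Re ⟪(1 - U*) p, w⟫ ≤ ½ ‖(1 - U*) p‖ ‖w‖`.
On an eigenvector of `U` with eigenvalue `e^{iθ}`, the operator `(1 - U)(1 - U*)` acts by
`|1 - e^{iθ}|² ≤ θ²`; as it is self-adjoint, its eigenspaces are orthogonal, so on their sum
`S` we get `‖(1 - U*) p‖ ≤ Θ ‖p‖`, hence `‖p‖ ≤ (Θ/2) ‖w‖`.
-/

open Module End RCLike ComplexConjugate

theorem Module.End.eigenspace_le_eigenspace_inv_of_mul_eq_one {K V : Type*} [Field K]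
    [AddCommGroup V] [Module K V] {U W : End K V} (h : W * U = 1) (μ : K) :
    eigenspace U μ ≤ eigenspace W μ⁻¹ := by
  intro x hx
  rw [mem_eigenspace_iff] at hx ⊢
  have hWx : μ • W x = x := by rw [← map_smul, ← hx, ← mul_apply, h, one_apply]
  rcases eq_or_ne μ 0 with rfl | hμ
  · rw [zero_smul] at hWx
    simp [← hWx]
  · calc W x = μ⁻¹ • μ • W x := by rw [smul_smul, inv_mul_cancel₀ hμ, one_smul]
      _ = μ⁻¹ • x := by rw [hWx]

section InnerProductSpace

variable {𝕜 E : Type*} [RCLike 𝕜] [NormedAddCommGroup E] [InnerProductSpace 𝕜 E]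

local notation "⟪" x ", " y "⟫" => inner 𝕜 x y

theorem LinearMap.IsSymmetric.re_inner_apply_le_of_mem_iSup_eigenspace {T : E →ₗ[𝕜] E}
    (hT : T.IsSymmetric) {c : ℝ} {x : E}
    (hx : x ∈ ⨆ (μ : ℝ) (_ : μ ≤ c), eigenspace T (μ : 𝕜)) :
    re ⟪x, T x⟫ ≤ c * ‖x‖ ^ 2 := by
  rw [iSup_subtype', Submodule.mem_iSup_iff_exists_finset] at hx
  obtain ⟨s, hx⟩ := hx
  obtain ⟨f, rfl⟩ := (Submodule.mem_iSup_finset_iff_exists_sum _ _).mp hx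
  have hV : OrthogonalFamily 𝕜 (fun μ : {μ : ℝ // μ ≤ c} => eigenspace T (μ : 𝕜))
      fun μ => (eigenspace T (μ : 𝕜)).subtypeₗᵢ :=
    hT.orthogonalFamily_eigenspaces.comp (ofReal_injective.comp Subtype.val_injective)
  let g : ∀ μ : {μ : ℝ // μ ≤ c}, eigenspace T (μ : 𝕜) := fun μ => (μ.1 : 𝕜) • f μ
  have hTf : T (∑ μ ∈ s, (f μ : E)) = ∑ μ ∈ s, (g μ : E) :=
    (map_sum T _ s).trans <| Finset.sum_congr rfl fun μ _ => mem_eigenspace_iff.mp (f μ).2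
  calc re ⟪∑ μ ∈ s, (f μ : E), T (∑ μ ∈ s, (f μ : E))⟫
      = ∑ μ ∈ s, μ.1 * ‖f μ‖ ^ 2 := by
        simpa [hTf, g, inner_smul_right, inner_self_eq_norm_sq_to_K] using
          congrArg re (hV.inner_sum f g s)
    _ ≤ ∑ μ ∈ s, c * ‖f μ‖ ^ 2 := by gcongr with μ; exact μ.2
    _ = c * ‖∑ μ ∈ s, (f μ : E)‖ ^ 2 := by
        simpa [← Finset.mul_sum] using congrArg (c * ·) (hV.norm_sum f s).symm

variable [FiniteDimensional 𝕜 E]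

theorem norm_apply_sq_eq_re_inner_star_mul_self_apply (L : E →ₗ[𝕜] E) (x : E) :
    ‖L x‖ ^ 2 = re ⟪x, (star L * L) x⟫ := by
  rw [LinearMap.star_eq_adjoint, mul_apply, LinearMap.adjoint_inner_right,
    ← inner_self_eq_norm_sq (𝕜 := 𝕜)]

theorem Submodule.norm_starProjection_apply_le_of_norm_star_apply_le (K : Submodule 𝕜 E)
    {L : E →ₗ[𝕜] E} {c : ℝ} (hc : 0 ≤ c) (hL : ∀ x ∈ K, ‖star L x‖ ≤ c * ‖x‖) (w : E) :
    ‖K.starProjection (L w)‖ ≤ c * ‖w‖ := by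
  set p := K.starProjection (L w)
  have hp : ‖p‖ * ‖p‖ ≤ ‖p‖ * (c * ‖w‖) :=
    calc ‖p‖ * ‖p‖ = re ⟪p, L w⟫ := by
          rw [← sq, K.re_inner_starProjection_eq_normSq, Submodule.coe_norm,
            coe_orthogonalProjectionOnto_apply]
      _ = re ⟪star L p, w⟫ := by
          rw [LinearMap.star_eq_adjoint, LinearMap.adjoint_inner_left]
      _ ≤ ‖star L p‖ * ‖w‖ := re_inner_le_norm _ _
      _ ≤ c * ‖p‖ * ‖w‖ := by gcongr; exact hL p (K.starProjection_apply_mem _)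
      _ = ‖p‖ * (c * ‖w‖) := by ring
  rcases (norm_nonneg p).eq_or_lt with hp0 | hp0
  · rw [← hp0]
    positivity
  · exact le_of_mul_le_mul_left hp hp0

theorem eigenspace_le_eigenspace_one_sub_mul_one_sub_star {U : E →ₗ[𝕜] E}
    (hU : U ∈ unitary (E →ₗ[𝕜] E)) {μ : 𝕜} (hμ : ‖μ‖ = 1) :
    eigenspace U μ ≤ eigenspace ((1 - U) * (1 - star U)) ((‖1 - μ‖ ^ 2 : ℝ) : 𝕜) := by
  intro x hx
  have hstar := eigenspace_le_eigenspace_inv_of_mul_eq_one (Unitary.star_mul_self_of_mem hU) μ hx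
  rw [mem_eigenspace_iff] at hx hstar ⊢
  rw [inv_eq_conj hμ] at hstar
  have hnorm : ((‖1 - μ‖ ^ 2 : ℝ) : 𝕜) = (1 - conj μ) * (1 - μ) := by
    rw [ofReal_pow, ← RCLike.conj_mul, map_sub, map_one]
  simp only [mul_apply, LinearMap.sub_apply, one_apply, hstar, map_sub, map_smul, hx, hnorm]
  module

end InnerProductSpace

theorem norm_one_sub_star_apply_le_of_mem_iSup_eigenspace {E : Type*} [NormedAddCommGroup E]
    [InnerProductSpace ℂ E] [FiniteDimensional ℂ E] {U : E →ₗ[ℂ] E}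
    (hU : U ∈ unitary (E →ₗ[ℂ] E)) {Θ : ℝ} (hΘ : 0 ≤ Θ) {x : E}
    (hx : x ∈ ⨆ (θ : ℝ) (_ : |θ| ≤ Θ), eigenspace U (Complex.exp (θ * Complex.I))) :
    ‖(1 - star U) x‖ ≤ Θ * ‖x‖ := by
  have hT : (star (1 - star U) * (1 - star U)).IsSymmetric :=
    (LinearMap.isSymmetric_iff_isSelfAdjoint _).mpr (.star_mul_self _)
  have hxT : x ∈ ⨆ (μ : ℝ) (_ : μ ≤ Θ ^ 2),
      eigenspace (star (1 - star U) * (1 - star U)) (μ : ℂ) := by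
    rw [star_sub, star_one, star_star]
    refine SetLike.le_def.mp (iSup₂_le fun θ (hθ : |θ| ≤ Θ) => ?_) hx
    refine (eigenspace_le_eigenspace_one_sub_mul_one_sub_star hU
      (Complex.norm_exp_ofReal_mul_I θ)).trans (le_iSup₂_of_le _ ?_ le_rfl)
    have hgap : ‖1 - Complex.exp (θ * Complex.I)‖ ≤ Θ := by
      rw [norm_sub_rev, mul_comm]
      exact Real.norm_exp_I_mul_ofReal_sub_one_le.trans hθ
    exact pow_le_pow_left₀ (norm_nonneg _) hgap 2
  have hsq := hT.re_inner_apply_le_of_mem_iSup_eigenspace hxT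
  rw [← norm_apply_sq_eq_re_inner_star_mul_self_apply, ← mul_pow] at hsq
  exact (pow_le_pow_iff_left₀ (norm_nonneg _) (by positivity) two_ne_zero).mp hsq

theorem IsStarProjection.two_smul_sub_one_mem_unitary {R A : Type*} [Semiring R] [Ring A]
    [StarRing A] [Module R A] {p : A} (hp : IsStarProjection p) :
    (2 : R) • p - 1 ∈ unitary A := by
  rw [two_smul, ← two_mul]
  exact hp.two_mul_sub_one_mem_unitary

namespace Matrix

variable {m n : Type*} [Fintype m] [Fintype n] {𝕜 : Type*} [RCLike 𝕜]

theorem isStarProjection_mul_conjTranspose_self [DecidableEq m] {A : Matrix n m 𝕜}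
    (hA : Aᴴ * A = 1) : IsStarProjection (A * Aᴴ) where
  isIdempotentElem := by
    rw [IsIdempotentElem, Matrix.mul_assoc, ← Matrix.mul_assoc Aᴴ, hA, Matrix.one_mul]
  isSelfAdjoint := by
    rw [IsSelfAdjoint, star_eq_conjTranspose, conjTranspose_mul, conjTranspose_conjTranspose]

theorem toEuclideanLin_eq_toMatrixOrthonormal_symm [DecidableEq n] (M : Matrix n n 𝕜) :
    toEuclideanLin M = (LinearMap.toMatrixOrthonormal (EuclideanSpace.basisFun n 𝕜)).symm M :=
  rfl

end Matrix

open Matrix in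
/-- Effective spectral gap lemma. -/
theorem stmt_13 (n k l : ℕ) (A : Matrix (Fin n) (Fin k) ℂ) (B : Matrix (Fin n) (Fin l) ℂ)
    (hA : Aᴴ * A = 1) (hB : Bᴴ * B = 1) (Θ : ℝ) (hΘ : 0 ≤ Θ)
    (S : Submodule ℂ (EuclideanSpace ℂ (Fin n)))
    (hS : S = ⨆ (θ : ℝ) (_ : |θ| ≤ Θ),
      Module.End.eigenspace
        (Matrix.toEuclideanLin
          (((2 : ℂ) • (B * Bᴴ) - 1) * ((2 : ℂ) • (A * Aᴴ) - 1)))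
        (Complex.exp (θ * Complex.I)))
    (w : EuclideanSpace ℂ (Fin n))
    (hw : Matrix.toEuclideanLin (A * Aᴴ) w = 0) :
    ‖(S.orthogonalProjection (Matrix.toEuclideanLin (B * Bᴴ) w) :
        EuclideanSpace ℂ (Fin n))‖ ≤ (Θ / 2) * ‖w‖ := by
  set U := toEuclideanLin (((2 : ℂ) • (B * Bᴴ) - 1) * ((2 : ℂ) • (A * Aᴴ) - 1))
  have hU : U ∈ unitary _ := by
    simp only [U, toEuclideanLin_eq_toMatrixOrthonormal_symm]
    exact Unitary.map_mem _ <| mul_mem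
      (isStarProjection_mul_conjTranspose_self hB).two_smul_sub_one_mem_unitary
      (isStarProjection_mul_conjTranspose_self hA).two_smul_sub_one_mem_unitary
  have hUw : toEuclideanLin (B * Bᴴ) w = (1 - U) ((2 : ℂ)⁻¹ • w) := by
    simp only [U, toEuclideanLin_eq_toMatrixOrthonormal_symm] at hw ⊢
    simp only [map_mul, map_sub, map_smul, map_one, End.mul_apply, LinearMap.sub_apply,
      End.one_apply, LinearMap.smul_apply, hw, map_zero, smul_zero]
    module
  rw [hUw]
  calc _ ≤ Θ * ‖(2 : ℂ)⁻¹ • w‖ :=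
        S.norm_starProjection_apply_le_of_norm_star_apply_le hΘ (fun x hx => by
          rw [star_sub, star_one]
          exact norm_one_sub_star_apply_le_of_mem_iSup_eigenspace hU hΘ (hS ▸ hx)) _
    _ = Θ / 2 * ‖w‖ := by
      rw [norm_smul, norm_inv, Complex.norm_ofNat]
      ring
end

section
/- Let x ∈ {0,1}^p with p odd, and construct the graph on vertices {v_{i,b} : i ∈ Z/p, b ∈ {0,1}} with edges {v_{i,b}, v_{i+1, b⊕x_i}}. Then this graph is bipartite if and only if the parity of x is odd. -/
/-!
A `ZMod 2`-valued 2-colouring of `parityGraph p x` is a function `c` with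
`c (i + 1, b + x i) = c (i, b) + 1`. On the cycle `ZMod p`, a function `g` is a discrete
derivative, `φ (i + 1) = φ i + g i`, exactly when `∑ g = 0`. If `∑ x = 1`, then
`∑ (x + 1) = 1 + p = 0`, and `c (i, b) = b + φ i` with `φ` a primitive of `x + 1` is a
colouring. If `∑ x = 0`, then `x` has a primitive `σ`, and `i ↦ c (i, σ i)` would be a
primitive of the constant `1`, forcing `p = 0` in `ZMod 2`.
-/

/-- The 2-regular "parity" graph on `ZMod p × ZMod 2`: each vertex `(i,b)` is
joined to `(i+1, b + x i)` (indices mod `p`, values mod 2). -/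
def parityGraph (p : ℕ) (x : ZMod p → ZMod 2) : SimpleGraph (ZMod p × ZMod 2) where
  Adj a b := a ≠ b ∧
    ((b.1 = a.1 + 1 ∧ b.2 = a.2 + x a.1) ∨ (a.1 = b.1 + 1 ∧ a.2 = b.2 + x b.1))
  symm := by
    constructor
    rintro a b ⟨hne, h⟩
    exact ⟨hne.symm, h.symm⟩
  loopless := by
    constructor
    rintro a ⟨hne, -⟩
    exact hne rfl

namespace ZMod

theorem eq_add_one_iff_ne (a b : ZMod 2) : b = a + 1 ↔ b ≠ a := by
  revert a b; decide

theorem natCast_sum_val {ι : Type*} (s : Finset ι) {n : ℕ} [NeZero n] (x : ι → ZMod n) :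
    ((∑ i ∈ s, (x i).val : ℕ) : ZMod n) = ∑ i ∈ s, x i := by
  simp only [Nat.cast_sum, natCast_zmod_val]

variable {p : ℕ} [NeZero p] {A : Type*} [AddCommGroup A]

theorem sum_range_natCast_s17 (g : ZMod p → A) : ∑ j ∈ Finset.range p, g j = ∑ i, g i := by
  refine Finset.sum_nbij' (↑) val (fun _ _ => Finset.mem_univ _)
    (fun i _ => Finset.mem_range.2 i.val_lt) (fun j hj => val_cast_of_lt (Finset.mem_range.1 hj))
    (fun i _ => natCast_zmod_val i) fun _ _ => rfl

theorem exists_forall_add_one_iff_sum_eq_zero (g : ZMod p → A) :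
    (∃ φ : ZMod p → A, ∀ i, φ (i + 1) = φ i + g i) ↔ ∑ i, g i = 0 := by
  constructor
  · rintro ⟨φ, hφ⟩
    have hshift := Equiv.sum_comp (Equiv.addRight (1 : ZMod p)) φ
    simpa [hφ, Finset.sum_add_distrib] using hshift
  · intro hg
    refine ⟨fun i => ∑ j ∈ Finset.range i.val, g j, fun i => ?_⟩
    obtain hlt | heq := (show i.val + 1 ≤ p from i.val_lt).lt_or_eq
    · have hval : (i + 1).val = i.val + 1 := by
        rw [← val_cast_of_lt hlt]; push_cast [natCast_zmod_val]; rfl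
      simp only [hval, Finset.sum_range_succ, natCast_zmod_val]
    · have hi : i + 1 = 0 := by
        rw [← natCast_zmod_val i, ← Nat.cast_add_one, heq, natCast_self]
      dsimp only
      rw [hi, val_zero, Finset.range_zero, Finset.sum_empty, ← hg, ← sum_range_natCast_s17,
        show Finset.range p = Finset.range (i.val + 1) by rw [heq], Finset.sum_range_succ,
        natCast_zmod_val]

end ZMod

section parityGraph

variable {p : ℕ} [Fact (1 < p)] (x : ZMod p → ZMod 2)

theorem parityGraph_adj_succ (i : ZMod p) (b : ZMod 2) :
    (parityGraph p x).Adj (i, b) (i + 1, b + x i) :=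
  ⟨fun h => by simpa using congrArg Prod.fst h, Or.inl ⟨rfl, rfl⟩⟩

theorem parityGraph_colorable_two_iff :
    (parityGraph p x).Colorable 2 ↔
      ∃ c : ZMod p × ZMod 2 → ZMod 2, ∀ i b, c (i + 1, b + x i) = c (i, b) + 1 := by
  constructor
  · rintro ⟨C⟩
    exact ⟨C, fun i b =>
      (ZMod.eq_add_one_iff_ne _ _).2 (C.valid (parityGraph_adj_succ x i b)).symm⟩
  · rintro ⟨c, hc⟩
    have C : (parityGraph p x).Coloring (ZMod 2) := .mk c <| by
      rintro ⟨i, b⟩ ⟨j, b'⟩ ⟨-, ⟨rfl, rfl⟩ | ⟨rfl, rfl⟩⟩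
      · exact ((ZMod.eq_add_one_iff_ne _ _).1 (hc i b)).symm
      · exact (ZMod.eq_add_one_iff_ne _ _).1 (hc j b')
    simpa using C.colorable

end parityGraph

theorem stmt_17 (p : ℕ) [NeZero p] (hp3 : 3 ≤ p) (hp : Odd p) (x : ZMod p → ZMod 2) :
    (parityGraph p x).Colorable 2 ↔ Odd (∑ i : ZMod p, (x i).val) := by
  have : Fact (1 < p) := ⟨by omega⟩
  have hp2 : (p : ZMod 2) = 1 := ZMod.natCast_eq_one_iff_odd.2 hp
  rw [parityGraph_colorable_two_iff]
  constructor
  · rintro ⟨c, hc⟩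
    by_contra hx
    rw [Nat.not_odd_iff_even, ← ZMod.natCast_eq_zero_iff_even, ZMod.natCast_sum_val] at hx
    obtain ⟨σ, hσ⟩ := (ZMod.exists_forall_add_one_iff_sum_eq_zero x).2 hx
    have hloop := (ZMod.exists_forall_add_one_iff_sum_eq_zero fun _ => (1 : ZMod 2)).1
      ⟨fun i => c (i, σ i), fun i => by dsimp only; rw [hσ, hc]⟩
    simp [hp2] at hloop
  · rw [← ZMod.natCast_eq_one_iff_odd, ZMod.natCast_sum_val]
    intro hx
    obtain ⟨φ, hφ⟩ := (ZMod.exists_forall_add_one_iff_sum_eq_zero fun i => x i + 1).2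
      (by simp [Finset.sum_add_distrib, hx, hp2]; decide)
    exact ⟨fun v => v.2 + φ v.1, fun i b => by simp only [hφ]; grind⟩
end
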